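/- Replacement of the 1-morphism part of a gauge transformation: Let F : G → H be a morphism of cosimplicial crossed groupoids, suppose (f, c) : (y, h, b) → (y', h', b') is a gauge transformation between descent data in H, and suppose v ∈ H⁰₂(y) is such that f̃ := f ∘ D(v). Then setting c̃ := Ad(h⁻¹)(v_{(1)}⁻¹) ∘ c ∘ v_{(0)}, the pair (f̃, c̃) is also a gauge transformation (y, h, b) → (y', h', b'). -/

import Mathlib

/-! Crossed groupoids (= crossed modules over groupoids), following Yekutieli,
"Combinatorial descent data for gerbes". -/

structure CrossedGroupoid : Type 1 where
  Obj : Type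
  Hom : Obj → Obj → Type
  id : ∀ x, Hom x x
  comp : ∀ {x y z}, Hom y z → Hom x y → Hom x z
  inv : ∀ {x y}, Hom x y → Hom y x
  comp_assoc : ∀ {x y z w} (h : Hom z w) (g : Hom y z) (f : Hom x y),
    comp (comp h g) f = comp h (comp g f)
  id_comp : ∀ {x y} (f : Hom x y), comp (id y) f = f
  comp_id : ∀ {x y} (f : Hom x y), comp f (id x) = f
  inv_comp : ∀ {x y} (f : Hom x y), comp (inv f) f = id x
  comp_inv : ∀ {x y} (f : Hom x y), comp f (inv f) = id y
  -- the totally disconnected groupoid 𝒢₂, i.e. a family of groups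
  G2 : Obj → Type
  mul : ∀ {x}, G2 x → G2 x → G2 x
  one : ∀ x, G2 x
  inv2 : ∀ {x}, G2 x → G2 x
  mul_assoc : ∀ {x} (a b c : G2 x), mul (mul a b) c = mul a (mul b c)
  one_mul : ∀ {x} (a : G2 x), mul (one x) a = a
  mul_one : ∀ {x} (a : G2 x), mul a (one x) = a
  inv2_mul : ∀ {x} (a : G2 x), mul (inv2 a) a = one x
  -- the twisting: an action of 𝒢₁ on 𝒢₂
  Ad : ∀ {x y}, Hom x y → G2 x → G2 y
  Ad_mul : ∀ {x y} (g : Hom x y) (a b : G2 x), Ad g (mul a b) = mul (Ad g a) (Ad g b)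
  Ad_one : ∀ {x y} (g : Hom x y), Ad g (one x) = one y
  Ad_id : ∀ {x} (a : G2 x), Ad (id x) a = a
  Ad_comp : ∀ {x y z} (h : Hom y z) (g : Hom x y) (a : G2 x),
    Ad (comp h g) a = Ad h (Ad g a)
  -- the feedback D : 𝒢₂ → 𝒢₁, identity on objects
  D : ∀ {x}, G2 x → Hom x x
  D_mul : ∀ {x} (a b : G2 x), D (mul a b) = comp (D a) (D b)
  D_one : ∀ x, D (one x) = id x
  -- equivariance of the feedback
  D_Ad : ∀ {x y} (g : Hom x y) (a : G2 x), D (Ad g a) = comp (comp g (D a)) (inv g)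
  -- Peiffer condition
  peiffer : ∀ {x} (a b : G2 x), Ad (D a) b = mul (mul a b) (inv2 a)

namespace CrossedGroupoid

/-- Transport of 1-morphisms along equalities of objects. -/
def hcast (G : CrossedGroupoid) {x x' y y' : G.Obj} (ex : x = x') (ey : y = y')
    (f : G.Hom x y) : G.Hom x' y' := ey ▸ ex ▸ f

/-- Transport of 2-morphisms along an equality of objects. -/
def cast2 (G : CrossedGroupoid) {x x' : G.Obj} (e : x = x') (a : G.G2 x) : G.G2 x' := e ▸ a

/-- The relation "isomorphic in 𝒢₁". -/
def pi0Rel (G : CrossedGroupoid) : G.Obj → G.Obj → Prop := fun x y => Nonempty (G.Hom x y)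

/-- π₀ of a crossed groupoid: isomorphism classes of objects of 𝒢₁. -/
def pi0 (G : CrossedGroupoid) : Type := Quot G.pi0Rel

/-- The right action relation on a hom-set: g' = g ∘ D(a). -/
def homRel (G : CrossedGroupoid) (x x' : G.Obj) : G.Hom x x' → G.Hom x x' → Prop :=
  fun g g' => ∃ a : G.G2 x, g' = G.comp g (G.D a)

/-- π₁(G, x, x') := 𝒢₁(x,x') / 𝒢₂(x). -/
def pi1' (G : CrossedGroupoid) (x x' : G.Obj) : Type := Quot (G.homRel x x')

/-- π₁(G, x) = Coker(D : 𝒢₂(x) → 𝒢₁(x)) as a quotient set. -/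
def pi1 (G : CrossedGroupoid) (x : G.Obj) : Type := G.pi1' x x

/-- π₂(G, x) = Ker(D : 𝒢₂(x) → 𝒢₁(x)). -/
def pi2 (G : CrossedGroupoid) (x : G.Obj) : Type := {a : G.G2 x // G.D a = G.id x}

end CrossedGroupoid

/-- A morphism of crossed groupoids. -/
structure CrossedGroupoidHom (G H : CrossedGroupoid) where
  obj : G.Obj → H.Obj
  map1 : ∀ {x y : G.Obj}, G.Hom x y → H.Hom (obj x) (obj y)
  map2 : ∀ {x : G.Obj}, G.G2 x → H.G2 (obj x)
  map1_comp : ∀ {x y z : G.Obj} (g : G.Hom y z) (f : G.Hom x y),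
    map1 (G.comp g f) = H.comp (map1 g) (map1 f)
  map1_id : ∀ x : G.Obj, map1 (G.id x) = H.id (obj x)
  map2_mul : ∀ {x : G.Obj} (a b : G.G2 x), map2 (G.mul a b) = H.mul (map2 a) (map2 b)
  map_D : ∀ {x : G.Obj} (a : G.G2 x), map1 (G.D a) = H.D (map2 a)
  map_Ad : ∀ {x y : G.Obj} (g : G.Hom x y) (a : G.G2 x),
    map2 (G.Ad g a) = H.Ad (map1 g) (map2 a)

namespace CrossedGroupoidHom

/-- Identity morphism of crossed groupoids. -/
def id (G : CrossedGroupoid) : CrossedGroupoidHom G G where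
  obj := fun x => x
  map1 := fun f => f
  map2 := fun a => a
  map1_comp := fun _ _ => rfl
  map1_id := fun _ => rfl
  map2_mul := fun _ _ => rfl
  map_D := fun _ => rfl
  map_Ad := fun _ _ => rfl

/-- Composition of morphisms of crossed groupoids. -/
def comp {G H K : CrossedGroupoid} (F₂ : CrossedGroupoidHom H K) (F₁ : CrossedGroupoidHom G H) :
    CrossedGroupoidHom G K where
  obj := fun x => F₂.obj (F₁.obj x)
  map1 := fun f => F₂.map1 (F₁.map1 f)
  map2 := fun a => F₂.map2 (F₁.map2 a)
  map1_comp := fun g f => by rw [F₁.map1_comp, F₂.map1_comp]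
  map1_id := fun x => by rw [F₁.map1_id, F₂.map1_id]
  map2_mul := fun a b => by rw [F₁.map2_mul, F₂.map2_mul]
  map_D := fun a => by rw [F₁.map_D, F₂.map_D]
  map_Ad := fun g a => by rw [F₁.map_Ad, F₂.map_Ad]

variable {G H : CrossedGroupoid}

/-- The induced map on π₀. -/
def pi0map (F : CrossedGroupoidHom G H) : G.pi0 → H.pi0 :=
  Quot.map F.obj (fun _ _ h => ⟨F.map1 h.some⟩)

/-- The induced map on π₁(−, x, x'). -/
def pi1'map (F : CrossedGroupoidHom G H) (x x' : G.Obj) :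
    G.pi1' x x' → H.pi1' (F.obj x) (F.obj x') :=
  Quot.map F.map1 (by
    rintro g g' ⟨a, rfl⟩
    exact ⟨F.map2 a, by rw [F.map1_comp, F.map_D]⟩)

/-- The induced map on π₁(−, x). -/
def pi1map (F : CrossedGroupoidHom G H) (x : G.Obj) : G.pi1 x → H.pi1 (F.obj x) :=
  F.pi1'map x x

/-- The induced map on π₂(−, x). -/
def pi2map (F : CrossedGroupoidHom G H) (x : G.Obj) : G.pi2 x → H.pi2 (F.obj x) :=
  fun a => ⟨F.map2 a.1, by rw [← F.map_D, a.2, F.map1_id]⟩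

/-- A weak equivalence of crossed groupoids: bijective on π₀, π₁ and π₂. -/
def IsWeakEquiv (F : CrossedGroupoidHom G H) : Prop :=
  Function.Bijective F.pi0map ∧ (∀ x, Function.Bijective (F.pi1map x)) ∧
    (∀ x, Function.Bijective (F.pi2map x))

end CrossedGroupoidHom

/-! ### Combinatorics of the simplex category -/

/-- The vertex (i) of Δ^q, as a monotone map Δ⁰ → Δ^q. -/
def vtxMap {q : ℕ} (i : Fin (q + 1)) : Fin 1 →o Fin (q + 1) :=
  ⟨fun _ => i, fun _ _ _ => le_rfl⟩

/-- The edge (i,j) of Δ^q, as a monotone map Δ¹ → Δ^q. -/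
def edgeMap {q : ℕ} (i j : Fin (q + 1)) (h : i ≤ j) : Fin 2 →o Fin (q + 1) :=
  ⟨fun k => if (k : ℕ) = 0 then i else j, by
    intro a b hab
    have hab' : (a : ℕ) ≤ (b : ℕ) := hab
    show (if (a : ℕ) = 0 then i else j) ≤ (if (b : ℕ) = 0 then i else j)
    by_cases ha : (a : ℕ) = 0
    · by_cases hb : (b : ℕ) = 0
      · rw [if_pos ha, if_pos hb]
      · rw [if_pos ha, if_neg hb]; exact h
    · have hb : ¬ (b : ℕ) = 0 := fun hb0 => ha (Nat.le_zero.mp (hb0 ▸ hab'))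
      rw [if_neg ha, if_neg hb]⟩

/-- The triangle (i,j,k) of Δ^q, as a monotone map Δ² → Δ^q. -/
def triMap {q : ℕ} (i j k : Fin (q + 1)) (hij : i ≤ j) (hjk : j ≤ k) :
    Fin 3 →o Fin (q + 1) :=
  ⟨fun m => if (m : ℕ) = 0 then i else if (m : ℕ) = 1 then j else k, by
    intro a b hab
    have hab' : (a : ℕ) ≤ (b : ℕ) := hab
    show (if (a : ℕ) = 0 then i else if (a : ℕ) = 1 then j else k) ≤
      (if (b : ℕ) = 0 then i else if (b : ℕ) = 1 then j else k)
    by_cases ha0 : (a : ℕ) = 0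
    · by_cases hb0 : (b : ℕ) = 0
      · rw [if_pos ha0, if_pos hb0]
      · by_cases hb1 : (b : ℕ) = 1
        · rw [if_pos ha0, if_neg hb0, if_pos hb1]; exact hij
        · rw [if_pos ha0, if_neg hb0, if_neg hb1]; exact hij.trans hjk
    · by_cases ha1 : (a : ℕ) = 1
      · have hb0 : ¬ (b : ℕ) = 0 := by omega
        by_cases hb1 : (b : ℕ) = 1
        · rw [if_neg ha0, if_pos ha1, if_neg hb0, if_pos hb1]
        · rw [if_neg ha0, if_pos ha1, if_neg hb0, if_neg hb1]; exact hjk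
      · have hb0 : ¬ (b : ℕ) = 0 := by omega
        have hb1 : ¬ (b : ℕ) = 1 := by omega
        rw [if_neg ha0, if_neg ha1, if_neg hb0, if_neg hb1]⟩

theorem comp_vtxMap {p q : ℕ} (α : Fin (p + 1) →o Fin (q + 1)) (i : Fin (p + 1)) :
    α.comp (vtxMap i) = vtxMap (α i) := rfl

/-! ### Cosimplicial crossed groupoids -/

/-- A cosimplicial crossed groupoid: a functor Δ → CrGrpd. -/
structure CosimplicialCrossedGroupoid : Type 1 where
  obj : ℕ → CrossedGroupoid
  map : ∀ {p q : ℕ}, (Fin (p + 1) →o Fin (q + 1)) → CrossedGroupoidHom (obj p) (obj q)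
  map_id : ∀ p, map (OrderHom.id : Fin (p + 1) →o Fin (p + 1)) = CrossedGroupoidHom.id (obj p)
  map_comp : ∀ {p q r : ℕ} (β : Fin (q + 1) →o Fin (r + 1)) (α : Fin (p + 1) →o Fin (q + 1)),
    map (β.comp α) = (map β).comp (map α)

namespace CosimplicialCrossedGroupoid

variable (G : CosimplicialCrossedGroupoid)

theorem obj_comp {p q r : ℕ} (β : Fin (q + 1) →o Fin (r + 1)) (α : Fin (p + 1) →o Fin (q + 1))
    (x : (G.obj p).Obj) :
    (G.map β).obj ((G.map α).obj x) = (G.map (β.comp α)).obj x := by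
  rw [G.map_comp]; rfl

/-- The object x of G⁰ pushed to the vertex (i) of Δ^q. -/
def X (x : (G.obj 0).Obj) (q : ℕ) (i : Fin (q + 1)) : (G.obj q).Obj :=
  (G.map (vtxMap i)).obj x

theorem X_push (x : (G.obj 0).Obj) {p q : ℕ} (α : Fin (p + 1) →o Fin (q + 1))
    (i : Fin (p + 1)) : (G.map α).obj (G.X x p i) = G.X x q (α i) := by
  unfold X
  rw [obj_comp, comp_vtxMap]

/-- Pushing a 1-morphism between vertex objects along α. -/
def push1 {x : (G.obj 0).Obj} {p q : ℕ} (α : Fin (p + 1) →o Fin (q + 1))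
    {i j : Fin (p + 1)} (g : (G.obj p).Hom (G.X x p i) (G.X x p j)) :
    (G.obj q).Hom (G.X x q (α i)) (G.X x q (α j)) :=
  (G.obj q).hcast (G.X_push x α i) (G.X_push x α j) ((G.map α).map1 g)

/-- Pushing a 2-morphism at a vertex object along α. -/
def push2 {x : (G.obj 0).Obj} {p q : ℕ} (α : Fin (p + 1) →o Fin (q + 1))
    {i : Fin (p + 1)} (a : (G.obj p).G2 (G.X x p i)) :
    (G.obj q).G2 (G.X x q (α i)) :=
  (G.obj q).cast2 (G.X_push x α i) ((G.map α).map2 a)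

/-- Yekutieli's combinatorial descent conditions (Definition 1.5):
the failure-of-1-cocycle condition and the twisted 2-cocycle condition. -/
def IsDescent (x : (G.obj 0).Obj)
    (g : (G.obj 1).Hom (G.X x 1 0) (G.X x 1 1))
    (a : (G.obj 2).G2 (G.X x 2 0)) : Prop :=
  ((G.obj 2).comp ((G.obj 2).comp ((G.obj 2).inv (G.push1 (edgeMap 0 2 (by decide)) g))
      (G.push1 (edgeMap 1 2 (by decide)) g)) (G.push1 (edgeMap 0 1 (by decide)) g)
    = (G.obj 2).D a)
  ∧
  ((G.obj 3).mul ((G.obj 3).mul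
        ((G.obj 3).inv2 (G.push2 (triMap 0 1 3 (by decide) (by decide)) a))
        (G.push2 (triMap 0 2 3 (by decide) (by decide)) a))
      (G.push2 (triMap 0 1 2 (by decide) (by decide)) a)
    = (G.obj 3).Ad ((G.obj 3).inv (G.push1 (edgeMap 0 1 (by decide)) g))
        (G.push2 (triMap 1 2 3 (by decide) (by decide)) a))

/-- A combinatorial descent datum (Definition 1.5). -/
structure Desc (G : CosimplicialCrossedGroupoid) where
  x : (G.obj 0).Obj
  g : (G.obj 1).Hom (G.X x 1 0) (G.X x 1 1)
  a : (G.obj 2).G2 (G.X x 2 0)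
  isDescent : G.IsDescent x g a

/-- The Yekutieli gauge-transformation conditions (Definition 1.7) for a pair (f, c). -/
def IsGauge (x : (G.obj 0).Obj) (g : (G.obj 1).Hom (G.X x 1 0) (G.X x 1 1))
    (a : (G.obj 2).G2 (G.X x 2 0))
    (x' : (G.obj 0).Obj) (g' : (G.obj 1).Hom (G.X x' 1 0) (G.X x' 1 1))
    (a' : (G.obj 2).G2 (G.X x' 2 0))
    (f : (G.obj 0).Hom x x') (c : (G.obj 1).G2 (G.X x 1 0)) : Prop :=
  (g' = (G.obj 1).comp ((G.obj 1).comp ((G.obj 1).comp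
      ((G.map (vtxMap (1 : Fin 2))).map1 f) g) ((G.obj 1).D c))
      ((G.obj 1).inv ((G.map (vtxMap (0 : Fin 2))).map1 f)))
  ∧
  (a' = (G.obj 2).Ad ((G.map (vtxMap (0 : Fin 3))).map1 f)
    ((G.obj 2).mul ((G.obj 2).mul ((G.obj 2).mul
        ((G.obj 2).inv2 (G.push2 (edgeMap 0 2 (by decide)) c)) a)
        ((G.obj 2).Ad ((G.obj 2).inv (G.push1 (edgeMap 0 1 (by decide)) g))
          (G.push2 (edgeMap 1 2 (by decide)) c)))
      (G.push2 (edgeMap 0 1 (by decide)) c)))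

/-- Gauge equivalence of descent data. -/
def GaugeEquiv (P Q : G.Desc) : Prop :=
  ∃ (f : (G.obj 0).Hom P.x Q.x) (c : (G.obj 1).G2 (G.X P.x 1 0)),
    G.IsGauge P.x P.g P.a Q.x Q.g Q.a f c

/-- The explicit formula for the transported 2-morphism a'
(Definition 1.7(ii) / Lemma 1.9). -/
def transportA {x x' : (G.obj 0).Obj} (f : (G.obj 0).Hom x x')
    (g : (G.obj 1).Hom (G.X x 1 0) (G.X x 1 1))
    (a : (G.obj 2).G2 (G.X x 2 0)) (c : (G.obj 1).G2 (G.X x 1 0)) :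
    (G.obj 2).G2 (G.X x' 2 0) :=
  (G.obj 2).Ad ((G.map (vtxMap (0 : Fin 3))).map1 f)
    ((G.obj 2).mul ((G.obj 2).mul ((G.obj 2).mul
        ((G.obj 2).inv2 (G.push2 (edgeMap 0 2 (by decide)) c)) a)
        ((G.obj 2).Ad ((G.obj 2).inv (G.push1 (edgeMap 0 1 (by decide)) g))
          (G.push2 (edgeMap 1 2 (by decide)) c)))
      (G.push2 (edgeMap 0 1 (by decide)) c))

end CosimplicialCrossedGroupoid

/-- A morphism of cosimplicial crossed groupoids. -/
structure CosimplicialMor (G H : CosimplicialCrossedGroupoid) where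
  app : ∀ p, CrossedGroupoidHom (G.obj p) (H.obj p)
  naturality : ∀ {p q : ℕ} (α : Fin (p + 1) →o Fin (q + 1)),
    (app q).comp (G.map α) = (H.map α).comp (app p)

namespace CosimplicialMor

variable {G H : CosimplicialCrossedGroupoid}

theorem app_X (F : CosimplicialMor G H) (x : (G.obj 0).Obj) (q : ℕ) (i : Fin (q + 1)) :
    (F.app q).obj (G.X x q i) = H.X ((F.app 0).obj x) q i :=
  congrFun (congrArg CrossedGroupoidHom.obj (F.naturality (vtxMap i))) x

/-- Image of an object of G⁰. -/
def objD (F : CosimplicialMor G H) (x : (G.obj 0).Obj) : (H.obj 0).Obj := (F.app 0).obj x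

/-- Image of a 1-morphism in dimension 0. -/
def mapF (F : CosimplicialMor G H) {x x' : (G.obj 0).Obj} (f : (G.obj 0).Hom x x') :
    (H.obj 0).Hom (F.objD x) (F.objD x') := (F.app 0).map1 f

/-- Image of the 1-morphism part of a descent datum. -/
def mapG (F : CosimplicialMor G H) {x : (G.obj 0).Obj}
    (g : (G.obj 1).Hom (G.X x 1 0) (G.X x 1 1)) :
    (H.obj 1).Hom (H.X (F.objD x) 1 0) (H.X (F.objD x) 1 1) :=
  (H.obj 1).hcast (F.app_X x 1 0) (F.app_X x 1 1) ((F.app 1).map1 g)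

/-- Image of the 2-morphism part of a descent datum. -/
def mapA (F : CosimplicialMor G H) {x : (G.obj 0).Obj} (a : (G.obj 2).G2 (G.X x 2 0)) :
    (H.obj 2).G2 (H.X (F.objD x) 2 0) :=
  (H.obj 2).cast2 (F.app_X x 2 0) ((F.app 2).map2 a)

/-- Image of the 2-morphism part of a gauge transformation. -/
def mapC (F : CosimplicialMor G H) {x : (G.obj 0).Obj} (c : (G.obj 1).G2 (G.X x 1 0)) :
    (H.obj 1).G2 (H.X (F.objD x) 1 0) :=
  (H.obj 1).cast2 (F.app_X x 1 0) ((F.app 1).map2 c)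

/-- A weak equivalence of cosimplicial crossed groupoids. -/
def IsWeakEquiv (F : CosimplicialMor G H) : Prop := ∀ p, (F.app p).IsWeakEquiv

end CosimplicialMor

/-! Replacing `f` by `f ∘ D(v)` and `c` by `c̃ = Ad(h⁻¹)(v₍₁₎⁻¹) ∘ c ∘ v₍₀₎` leaves both gauge
equations unchanged. In the equation for `h'`, equivariance of `D` gives
`D(c̃) = h⁻¹ D(v₍₁₎)⁻¹ h D(c) D(v₍₀₎)`, and the extra factors cancel against `f₍₁₎ D(v₍₁₎)` and
`(f₍₀₎ D(v₍₀₎))⁻¹`. In the equation for `b'`, the formula for `c̃` is natural, so its faces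
are `c̃₍ᵢⱼ₎ = Ad(h₍ᵢⱼ₎⁻¹)(v₍ⱼ₎⁻¹) c₍ᵢⱼ₎ v₍ᵢ₎`. The descent condition `h₍₀₂₎⁻¹ h₍₁₂₎ h₍₀₁₎ = D(b)`
and the Peiffer identity make `Ad(h₍₀₁₎⁻¹) ∘ Ad(h₍₁₂₎⁻¹)` equal to `Ad(h₍₀₂₎⁻¹)` conjugated by
`b`, so the `v₍₂₎`- and `v₍₁₎`-factors cancel and the twisted expression for `c̃` is the one for
`c` conjugated by `v₍₀₎`. That conjugation is absorbed by `Ad(D(v₍₀₎))` inside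
`Ad(f₍₀₎ D(v₍₀₎))`. -/

namespace CrossedGroupoid

variable (K : CrossedGroupoid)

instance (x : K.Obj) : Mul (K.G2 x) := ⟨K.mul⟩
instance (x : K.Obj) : One (K.G2 x) := ⟨K.one x⟩
instance (x : K.Obj) : Inv (K.G2 x) := ⟨K.inv2⟩

instance (x : K.Obj) : Group (K.G2 x) := Group.ofLeftAxioms K.mul_assoc K.one_mul K.inv2_mul

theorem mul_eq {x : K.Obj} (a b : K.G2 x) : K.mul a b = a * b := rfl

theorem inv2_eq {x : K.Obj} (a : K.G2 x) : K.inv2 a = a⁻¹ := rfl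

theorem Ad_inv {x y : K.Obj} (g : K.Hom x y) (a : K.G2 x) : K.Ad g a⁻¹ = (K.Ad g a)⁻¹ :=
  map_inv (MonoidHom.mk' (K.Ad g) (K.Ad_mul g)) a

theorem eq_inv_of_comp_eq_id {x y : K.Obj} {g : K.Hom x y} {u : K.Hom y x}
    (h : K.comp u g = K.id x) : u = K.inv g := by
  rw [← K.comp_id u, ← K.comp_inv g, ← K.comp_assoc, h, K.id_comp]

theorem inv_inv {x y : K.Obj} (g : K.Hom x y) : K.inv (K.inv g) = g :=
  (K.eq_inv_of_comp_eq_id (K.comp_inv g)).symm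

theorem inv_comp_rev {x y z : K.Obj} (g : K.Hom y z) (h : K.Hom x y) :
    K.inv (K.comp g h) = K.comp (K.inv h) (K.inv g) := by
  refine (K.eq_inv_of_comp_eq_id ?_).symm
  rw [K.comp_assoc, ← K.comp_assoc (K.inv g), K.inv_comp, K.id_comp, K.inv_comp]

theorem comp_inv_cancel_left {x y z : K.Obj} (g : K.Hom y z) (h : K.Hom x z) :
    K.comp g (K.comp (K.inv g) h) = h := by
  rw [← K.comp_assoc, K.comp_inv, K.id_comp]

theorem D_inv {x : K.Obj} (a : K.G2 x) : K.D a⁻¹ = K.inv (K.D a) := by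
  refine K.eq_inv_of_comp_eq_id ?_
  rw [← K.D_mul, mul_eq, inv_mul_cancel]
  exact K.D_one x

theorem cast2_mul {x x' : K.Obj} (e : x = x') (a b : K.G2 x) :
    K.cast2 e (a * b) = K.cast2 e a * K.cast2 e b := by
  subst e; rfl

theorem cast2_inv {x x' : K.Obj} (e : x = x') (a : K.G2 x) :
    K.cast2 e a⁻¹ = (K.cast2 e a)⁻¹ := by
  subst e; rfl

theorem cast2_Ad {x x' y y' : K.Obj} (ex : x = x') (ey : y = y') (g : K.Hom x y) (a : K.G2 x) :
    K.cast2 ey (K.Ad g a) = K.Ad (K.hcast ex ey g) (K.cast2 ex a) := by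
  subst ex ey; rfl

theorem hcast_inv {x x' y y' : K.Obj} (ex : x = x') (ey : y = y') (g : K.Hom x y) :
    K.hcast ey ex (K.inv g) = K.inv (K.hcast ex ey g) := by
  subst ex ey; rfl

theorem gauge_hom_replace {y₀ y₁ y₀' y₁' : K.Obj} (f₀ : K.Hom y₀ y₀') (f₁ : K.Hom y₁ y₁')
    (g : K.Hom y₀ y₁) (c v₀ : K.G2 y₀) (v₁ : K.G2 y₁) :
    K.comp (K.comp (K.comp (K.comp f₁ (K.D v₁)) g) (K.D (K.Ad (K.inv g) v₁⁻¹ * c * v₀)))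
        (K.inv (K.comp f₀ (K.D v₀)))
      = K.comp (K.comp (K.comp f₁ g) (K.D c)) (K.inv f₀) := by
  rw [← mul_eq, ← mul_eq, K.D_mul, K.D_mul, K.D_Ad, K.inv_comp_rev, K.D_inv, K.inv_inv]
  simp only [K.comp_assoc, K.comp_inv_cancel_left]

theorem Ad_inv_Ad_inv_of_comp_eq_D {x₀ x₁ x₂ : K.Obj} {g₀₁ : K.Hom x₀ x₁} {g₁₂ : K.Hom x₁ x₂}
    {g₀₂ : K.Hom x₀ x₂} {a : K.G2 x₀}
    (h : K.comp (K.comp (K.inv g₀₂) g₁₂) g₀₁ = K.D a) (w : K.G2 x₂) :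
    K.Ad (K.inv g₀₁) (K.Ad (K.inv g₁₂) w) = a⁻¹ * K.Ad (K.inv g₀₂) w * a := by
  have hg : K.comp g₁₂ g₀₁ = K.comp g₀₂ (K.D a) := by
    rw [← h, K.comp_assoc, K.comp_inv_cancel_left]
  rw [← K.Ad_comp, ← K.inv_comp_rev, hg, K.inv_comp_rev, ← K.D_inv, K.Ad_comp, K.peiffer]
  simp only [mul_eq, inv2_eq, _root_.inv_inv]

theorem gauge_twist_replace {x₀ x₁ x₂ : K.Obj} {g₀₁ : K.Hom x₀ x₁} {g₁₂ : K.Hom x₁ x₂}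
    {g₀₂ : K.Hom x₀ x₂} {a : K.G2 x₀}
    (h : K.comp (K.comp (K.inv g₀₂) g₁₂) g₀₁ = K.D a)
    (c₀₁ c₀₂ v₀ : K.G2 x₀) (c₁₂ v₁ : K.G2 x₁) (v₂ : K.G2 x₂) :
    (K.Ad (K.inv g₀₂) v₂⁻¹ * c₀₂ * v₀)⁻¹ * a
        * K.Ad (K.inv g₀₁) (K.Ad (K.inv g₁₂) v₂⁻¹ * c₁₂ * v₁)
        * (K.Ad (K.inv g₀₁) v₁⁻¹ * c₀₁ * v₀)
      = v₀⁻¹ * (c₀₂⁻¹ * a * K.Ad (K.inv g₀₁) c₁₂ * c₀₁) * v₀ := by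
  simp only [← mul_eq, K.Ad_mul, K.Ad_inv_Ad_inv_of_comp_eq_D h]
  simp only [mul_eq, K.Ad_inv]
  group

theorem Ad_comp_D_conj {x y : K.Obj} (f : K.Hom x y) (v e : K.G2 x) :
    K.Ad (K.comp f (K.D v)) (v⁻¹ * e * v) = K.Ad f e := by
  rw [K.Ad_comp, K.peiffer]
  simp only [mul_eq, inv2_eq]
  group

end CrossedGroupoid

namespace CrossedGroupoidHom

variable {K L : CrossedGroupoid} (F : CrossedGroupoidHom K L)

theorem map2_inv {x : K.Obj} (a : K.G2 x) : F.map2 a⁻¹ = (F.map2 a)⁻¹ :=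
  map_inv (MonoidHom.mk' (F.map2 (x := x)) F.map2_mul) a

theorem map1_inv {x y : K.Obj} (g : K.Hom x y) : F.map1 (K.inv g) = L.inv (F.map1 g) :=
  L.eq_inv_of_comp_eq_id (by rw [← F.map1_comp, K.inv_comp, F.map1_id])

theorem cast2_map2_of_eq {F' : CrossedGroupoidHom K L} (h : F = F') {x : K.Obj}
    (a : K.G2 x) (e : F.obj x = F'.obj x) :
    L.cast2 e (F.map2 a) = F'.map2 a := by
  subst h; rfl

end CrossedGroupoidHom

namespace CosimplicialCrossedGroupoid

variable (G : CosimplicialCrossedGroupoid) {x : (G.obj 0).Obj} {p q : ℕ}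
  (α : Fin (p + 1) →o Fin (q + 1))

/-- `vtx2 v i` is the paper's `v_{(i)}`. -/
abbrev vtx2 (v : (G.obj 0).G2 x) (i : Fin (p + 1)) : (G.obj p).G2 (G.X x p i) :=
  (G.map (vtxMap i)).map2 v

theorem push2_mul {i : Fin (p + 1)} (a b : (G.obj p).G2 (G.X x p i)) :
    G.push2 α (a * b) = G.push2 α a * G.push2 α b :=
  (congrArg _ ((G.map α).map2_mul a b)).trans ((G.obj q).cast2_mul _ _ _)

theorem push2_inv {i : Fin (p + 1)} (a : (G.obj p).G2 (G.X x p i)) :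
    G.push2 α a⁻¹ = (G.push2 α a)⁻¹ :=
  (congrArg _ ((G.map α).map2_inv a)).trans ((G.obj q).cast2_inv _ _)

theorem push2_Ad {i j : Fin (p + 1)} (g : (G.obj p).Hom (G.X x p i) (G.X x p j))
    (a : (G.obj p).G2 (G.X x p i)) :
    G.push2 α ((G.obj p).Ad g a) = (G.obj q).Ad (G.push1 α g) (G.push2 α a) :=
  (congrArg _ ((G.map α).map_Ad g a)).trans ((G.obj q).cast2_Ad _ _ _ _)

theorem push1_inv {i j : Fin (p + 1)} (g : (G.obj p).Hom (G.X x p i) (G.X x p j)) :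
    G.push1 α ((G.obj p).inv g) = (G.obj q).inv (G.push1 α g) :=
  (congrArg _ ((G.map α).map1_inv g)).trans ((G.obj q).hcast_inv _ _ _)

theorem push2_vtx2 (v : (G.obj 0).G2 x) (k : Fin (p + 1)) :
    G.push2 α (G.vtx2 v k) = G.vtx2 v (α k) :=
  CrossedGroupoidHom.cast2_map2_of_eq _ (G.map_comp α (vtxMap k)).symm v _

theorem push2_replace {i j : Fin (p + 1)} (g : (G.obj p).Hom (G.X x p i) (G.X x p j))
    (c : (G.obj p).G2 (G.X x p i)) (v : (G.obj 0).G2 x) :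
    G.push2 α ((G.obj p).Ad ((G.obj p).inv g) (G.vtx2 v j)⁻¹ * c * G.vtx2 v i)
      = (G.obj q).Ad ((G.obj q).inv (G.push1 α g)) (G.vtx2 v (α j))⁻¹
        * G.push2 α c * G.vtx2 v (α i) := by
  rw [push2_mul, push2_mul, push2_Ad, push1_inv, push2_inv, push2_vtx2, push2_vtx2]

end CosimplicialCrossedGroupoid

theorem gauge_replace_general {H : CosimplicialCrossedGroupoid}
    (P Q : H.Desc) (f : (H.obj 0).Hom P.x Q.x) (c : (H.obj 1).G2 (H.X P.x 1 0))
    (hfc : H.IsGauge P.x P.g P.a Q.x Q.g Q.a f c) (v : (H.obj 0).G2 P.x) :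
    H.IsGauge P.x P.g P.a Q.x Q.g Q.a
      ((H.obj 0).comp f ((H.obj 0).D v))
      ((H.obj 1).mul ((H.obj 1).mul
        ((H.obj 1).Ad ((H.obj 1).inv P.g)
          ((H.obj 1).inv2 ((H.map (vtxMap (1 : Fin 2))).map2 v))) c)
        ((H.map (vtxMap (0 : Fin 2))).map2 v)) := by
  obtain ⟨hg, ha⟩ := hfc
  constructor
  · rw [hg, (H.map _).map1_comp, (H.map _).map_D, (H.map _).map1_comp, (H.map _).map_D]
    exact ((H.obj 1).gauge_hom_replace _ _ _ _ _ _).symm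
  · rw [ha, (H.map _).map1_comp, (H.map _).map_D]
    refine ((H.obj 2).Ad_comp_D_conj _ (H.vtx2 v 0) _).symm.trans (congrArg _ ?_)
    refine ((H.obj 2).gauge_twist_replace P.isDescent.1 _ _ _ _ (H.vtx2 v 1)
      (H.vtx2 v 2)).symm.trans ?_
    -- the faces of `Δ²` carry the vertices `edgeMap i j _ 0`, `edgeMap i j _ 1`, which are `i`, `j`
    -- only after unfolding `edgeMap`
    erw [H.push2_replace, H.push2_replace, H.push2_replace]
    rfl

/-- replacing the 1-morphism part of a gauge transformation:
if f̃ = f ∘ D(v) and c̃ = Ad(h⁻¹)(v_(1)⁻¹) ∘ c ∘ v_(0), then (f̃, c̃) is again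
a gauge transformation (y,h,b) → (y',h',b'). -/
theorem gauge_replace {G H : CosimplicialCrossedGroupoid} (F : CosimplicialMor G H)
    (P Q : H.Desc) (f : (H.obj 0).Hom P.x Q.x) (c : (H.obj 1).G2 (H.X P.x 1 0))
    (hfc : H.IsGauge P.x P.g P.a Q.x Q.g Q.a f c) (v : (H.obj 0).G2 P.x) :
    H.IsGauge P.x P.g P.a Q.x Q.g Q.a
      ((H.obj 0).comp f ((H.obj 0).D v))
      ((H.obj 1).mul ((H.obj 1).mul
        ((H.obj 1).Ad ((H.obj 1).inv P.g)
          ((H.obj 1).inv2 ((H.map (vtxMap (1 : Fin 2))).map2 v))) c)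
        ((H.map (vtxMap (0 : Fin 2))).map2 v)) :=
  gauge_replace_general P Q f c hfc v
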